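/- Let n ≥ 3 with n ≢ 1 (mod 3), and let V = (Fin n → ZMod 3) with the standard symmetric bilinear form B(x,y) = Σ_i x_i y_i (Gram determinant 1, i.e., type '+'). Then: (a) there exists an injective group homomorphism ψ from the symmetric group S_{n+1} to the group of linear automorphisms of V such that for every transposition τ ∈ S_{n+1}, ψ(τ) is a reflection t_v for some v ∈ V with B(v,v) = 2; and (b) there is no injective group homomorphism from S_{n+2} to the linear automorphisms of V sending every transposition to such a reflection. (Equivalently, φ(O_n^{+,+}(3)) = n+1 when n ≢ 1 (mod 3).) -/

import Mathlib

/-!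
(a) If points `p a` of `V`, indexed by `a ∈ ι`, have differences `p a - p b` with the inner
products of the roots `e a - e b` of type `A`, then
`w ↦ w + ∑ a, B w (p a) • (p (σ a) - p a)` is a representation of `Perm ι` in which the
transposition `(a b)` acts as the reflection in `p a - p b`. In `(ZMod 3)^n` such points are `e 1, …, e n` together with `(1 - n) • (1, …, 1)`, which works
exactly when `n ≢ 1 (mod 3)`.

(b) Conversely, the reflection vectors `v j` of the transpositions `(0 j)`, `j = 1, …, n + 1`, of
`S_{n+2}` are pairwise non-orthogonal because these transpositions do not commute, and since
`(i j) = (0 i) (0 j) (0 i)` commutes with `(0 k)`, `B (v j) (v k) = B (v j) (v i) * B (v i) (v k)`.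
Rescaling by signs turns their Gram matrix into `I + J`, which is nonsingular when
`n + 2 ≢ 0 (mod 3)`: this gives `n + 1` independent vectors in an `n`-dimensional space.
-/

/-- The standard symmetric bilinear form on `(ZMod 3)^n`: `B x y = ∑ i, x i * y i`
(Gram determinant `1`, type `+`). -/
def oForm (n : ℕ) (x y : Fin n → ZMod 3) : ZMod 3 :=
  ∑ i : Fin n, x i * y i

open Module Equiv Function

section Reflection

variable {R V : Type*} [CommRing R] [AddCommGroup V] [Module R V] (B : LinearMap.BilinForm R V)

-- `preReflection v (B.flip v)` is the reflection `t_v : w ↦ w - B w v • v`.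
def SendsSwapsToReflections {X : Type*} [DecidableEq X] (ρ : Perm X →* Module.End R V) : Prop :=
  ∀ τ : Perm X, τ.IsSwap → ∃ v, B v v = 2 ∧ ρ τ = preReflection v (B.flip v)

section PermRep

variable {ι : Type*} (p : ι → V)

section
variable [Fintype ι]

-- It maps `p c - p d` to `p (σ c) - p (σ d)` when `p` is a simplex (below), and fixes every `w`
-- with all `B w (p a) = 0`.
def permEnd (σ : Perm ι) : Module.End R V :=
  LinearMap.id + ∑ a, (B.flip (p a)).smulRight (p (σ a) - p a)

variable {B p}

lemma permEnd_apply (σ : Perm ι) (w : V) :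
    permEnd B p σ w = w + ∑ a, B w (p a) • (p (σ a) - p a) := by
  simp [permEnd]

lemma permEnd_one : permEnd B p 1 = 1 := by
  ext w
  simp [permEnd_apply]

end

variable [DecidableEq ι]

-- `g` absorbs the part of `B` that does not see differences: `B (p a - p b) (p c - p d)` is the
-- inner product of the roots `e a - e b` and `e c - e d`.
def IsSimplex : Prop :=
  ∃ g : ι → R, ∀ a c, B (p a) (p c) = (if a = c then 1 else 0) + g a + g c

variable {B p}

lemma IsSimplex.apply_sub_sub_self (hp : IsSimplex B p) {a b : ι} (hab : a ≠ b) :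
    B (p a - p b) (p a - p b) = 2 := by
  obtain ⟨g, hg⟩ := hp
  simp only [map_sub, LinearMap.sub_apply, hg, hab, hab.symm, if_true, if_false]
  ring

variable [Fintype ι]

lemma permEnd_swap (a b : ι) :
    permEnd B p (swap a b) = preReflection (p a - p b) (B.flip (p a - p b)) := by
  ext w
  rcases eq_or_ne a b with rfl | hab
  · simp [permEnd_apply, preReflection_apply]
  rw [permEnd_apply, Fintype.sum_eq_add a b hab fun x hx => by
    rw [swap_apply_of_ne_of_ne hx.1 hx.2, sub_self, smul_zero]]
  simp only [swap_apply_left, swap_apply_right, preReflection_apply,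
    LinearMap.BilinForm.flip_apply]
  rw [map_sub]
  module

lemma IsSimplex.exists_apply_permEnd (hp : IsSimplex B p) (τ : Perm ι) (w : V) :
    ∃ K, ∀ a, B (permEnd B p τ w) (p a) = B w (p (τ.symm a)) + K := by
  obtain ⟨g, hg⟩ := hp
  refine ⟨∑ c, B w (p c) * (g (τ c) - g c), fun a => ?_⟩
  have hsplit : ∀ c, B w (p c) * ((if τ c = a then 1 else 0) + g (τ c) + g a -
      ((if c = a then 1 else 0) + g c + g a)) = (if c = τ.symm a then B w (p c) else 0) -
      (if c = a then B w (p c) else 0) + B w (p c) * (g (τ c) - g c) := fun c => by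
    simp only [Equiv.eq_symm_apply]
    split_ifs <;> ring
  simp only [permEnd_apply, map_add, map_sum, map_smul, map_sub, LinearMap.add_apply,
    LinearMap.sum_apply, LinearMap.smul_apply, LinearMap.sub_apply, smul_eq_mul, hg, hsplit,
    Finset.sum_add_distrib, Finset.sum_sub_distrib, Finset.sum_ite_eq', Finset.mem_univ, if_true]
  ring

lemma IsSimplex.permEnd_mul (hp : IsSimplex B p) (σ τ : Perm ι) :
    permEnd B p (σ * τ) = permEnd B p σ * permEnd B p τ := by
  ext w
  obtain ⟨K, hK⟩ := hp.exists_apply_permEnd τ w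
  have hdiff : ∑ a, (p (σ a) - p a) = 0 := by
    rw [Finset.sum_sub_distrib, Equiv.sum_comp σ p, sub_self]
  have hreindex : ∑ a, B w (p (τ.symm a)) • (p (σ a) - p a) =
      ∑ b, B w (p b) • (p (σ (τ b)) - p (τ b)) := by
    rw [← Equiv.sum_comp τ]
    simp
  rw [Module.End.mul_apply, permEnd_apply σ]
  simp only [hK, add_smul, Finset.sum_add_distrib, ← Finset.smul_sum, hdiff, smul_zero, add_zero,
    hreindex]
  rw [permEnd_apply, permEnd_apply, add_assoc, ← Finset.sum_add_distrib]
  simp only [← smul_add, Perm.mul_apply]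
  congr 2; ext b; congr 1; abel

def IsSimplex.permRep (hp : IsSimplex B p) : Perm ι →* Module.End R V where
  toFun := permEnd B p
  map_one' := permEnd_one
  map_mul' := hp.permEnd_mul

lemma IsSimplex.sendsSwapsToReflections (hp : IsSimplex B p) :
    SendsSwapsToReflections B hp.permRep := by
  rintro _ ⟨a, b, hab, rfl⟩
  exact ⟨p a - p b, hp.apply_sub_sub_self hab, permEnd_swap a b⟩

lemma IsSimplex.injective_permRep [NeZero (2 : R)] (hp : IsSimplex B p)
    (hι : 4 ≤ Fintype.card ι) : Injective hp.permRep := by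
  rw [injective_iff_map_eq_one]
  intro σ hσ
  by_contra hσ1
  obtain ⟨c, hc⟩ : ∃ c, σ c ≠ c := by simpa [Perm.ext_iff] using hσ1
  obtain ⟨d, -, hd⟩ := Finset.exists_mem_notMem_of_card_lt_card
    (s := {c, σ c, σ.symm c}) (t := Finset.univ)
    (by rw [Finset.card_univ]; exact Finset.card_le_three.trans_lt hι)
  -- Pairing the fixed vector `p c - p d` with `p c` and with `p (σ c)` gives `1 = K = -1`.
  obtain ⟨K, hK⟩ := hp.exists_apply_permEnd σ (p c - p d)
  rw [show permEnd B p σ (p c - p d) = p c - p d from LinearMap.congr_fun hσ _] at hK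
  obtain ⟨g, hg⟩ := hp
  have hc' : σ.symm c ≠ c := fun h => hc (by simpa using (congrArg σ h).symm)
  have h1 := hK c
  have h2 := hK (σ c)
  simp only [Finset.mem_insert, Finset.mem_singleton, not_or] at hd
  simp only [map_sub, LinearMap.sub_apply, hg, symm_apply_apply, hd.1, hd.2.1, hd.2.2,
    Ne.symm hc, Ne.symm hc', if_true, if_false] at h1 h2
  exact two_ne_zero (by linear_combination h1 - h2 : (2 : R) = 0)

end PermRep

variable {B}

lemma preReflection_smul_of_mul_self_eq_one {c : R} (hc : c * c = 1) (v : V) :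
    preReflection (c • v) (B.flip (c • v)) = preReflection v (B.flip v) := by
  ext w
  simp only [preReflection_apply, LinearMap.BilinForm.flip_apply]
  rw [map_smul, smul_eq_mul, smul_smul, mul_right_comm, hc, one_mul]

lemma commute_preReflection_of_orthogonal {u w : V} (huw : B u w = 0) (hwu : B w u = 0) :
    Commute (preReflection u (B.flip u)) (preReflection w (B.flip w)) := by
  ext x
  simp only [Module.End.mul_apply, preReflection_apply, LinearMap.BilinForm.flip_apply, map_sub,
    map_smul, huw, hwu, zero_smul, sub_zero]
  abel

lemma preReflection_mul_mul_self (hB : B.IsSymm) {u : V} (hu : B u u = 2) (w : V) :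
    preReflection u (B.flip u) * preReflection w (B.flip w) * preReflection u (B.flip u) =
      preReflection (preReflection u (B.flip u) w) (B.flip (preReflection u (B.flip u) w)) := by
  ext x
  simp only [Module.End.mul_apply, preReflection_apply, LinearMap.BilinForm.flip_apply, map_sub,
    map_smul, LinearMap.sub_apply, LinearMap.smul_apply, smul_eq_mul, hu, hB.eq w u]
  module

end Reflection

lemma linearIndependent_of_gram_eq {K V ι : Type*} [Field K] [AddCommGroup V] [Module K V]
    [Fintype ι] [DecidableEq ι] {B : LinearMap.BilinForm K V} {u : ι → V}
    (hu : ∀ i j, B (u i) (u j) = if i = j then 2 else 1) (hι : (Fintype.card ι + 1 : K) ≠ 0) :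
    LinearIndependent K u := by
  rw [Fintype.linearIndependent_iff]
  intro g hg
  set S := ∑ j, g j
  have hgS : ∀ i, g i = -S := fun i => by
    have h := congrArg (B · (u i)) hg
    simp only [map_sum, map_smul, LinearMap.sum_apply, LinearMap.smul_apply, smul_eq_mul, hu,
      map_zero, LinearMap.zero_apply, mul_ite, mul_one] at h
    have hsplit : ∀ j, (if j = i then g j * 2 else g j) = g j + if j = i then g j else 0 :=
      fun j => by split_ifs <;> ring
    simp only [hsplit, Finset.sum_add_distrib, Finset.sum_ite_eq', Finset.mem_univ, if_true] at h
    linear_combination h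
  have hS : (Fintype.card ι + 1 : K) * S = 0 := by
    have : S = ∑ i : ι, -S := Finset.sum_congr rfl fun i _ => hgS i
    rw [Finset.sum_const, Finset.card_univ, nsmul_eq_mul] at this
    linear_combination this
  intro i
  rw [hgS, (mul_eq_zero.1 hS).resolve_left hι, neg_zero]

lemma Equiv.not_commute_swap_swap {X : Type*} [DecidableEq X] {a b c : X} (hab : a ≠ b)
    (hac : a ≠ c) (hbc : b ≠ c) : ¬Commute (swap a b) (swap a c) := fun h => by
  have := congrArg (· a) h.eq
  simp only [Perm.mul_apply, swap_apply_left, swap_apply_of_ne_of_ne hac.symm hbc.symm,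
    swap_apply_of_ne_of_ne hab.symm hbc] at this
  exact hbc this.symm

section ZModThree

variable {V : Type*} [AddCommGroup V] [Module (ZMod 3) V] {B : LinearMap.BilinForm (ZMod 3) V}

lemma orthogonal_or_preReflection_eq_of_commute (hB : B.IsSymm) {u w : V} (hu : B u u = 2)
    (h : Commute (preReflection u (B.flip u)) (preReflection w (B.flip w))) :
    B u w = 0 ∨ preReflection u (B.flip u) = preReflection w (B.flip w) := by
  refine or_iff_not_imp_left.2 fun hc => ?_
  have hc2 : B u w * B u w = 1 := by rw [← sq]; exact ZMod.pow_card_sub_one_eq_one hc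
  have key := LinearMap.congr_fun h.eq u
  simp only [Module.End.mul_apply, preReflection_apply, LinearMap.BilinForm.flip_apply, map_sub,
    map_smul, hu, hB.eq w u] at key
  have hcol : u = (2 * B u w) • w := by
    linear_combination (norm := module) key - hc2 • u
  rw [hcol, preReflection_smul_of_mul_self_eq_one]
  revert hc; generalize B u w = c; revert c; decide

lemma exists_gram_eq_ite_of_mul_eq {ι : Type*} [DecidableEq ι] (hB : B.IsSymm) {v : ι → V}
    (i₀ : ι) (hv : ∀ i, B (v i) (v i) = 2) (hne : Pairwise fun i j => B (v i) (v j) ≠ 0)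
    (htri : ∀ i j k, i ≠ j → j ≠ k → i ≠ k →
      B (v j) (v k) = B (v j) (v i) * B (v i) (v k)) :
    ∃ u : ι → V, ∀ i j, B (u i) (u j) = if i = j then 2 else 1 := by
  have sq_eq {i j : ι} (hij : i ≠ j) : B (v i) (v j) ^ 2 = 1 :=
    ZMod.pow_card_sub_one_eq_one (hne hij)
  refine ⟨fun j => (if j = i₀ then 1 else B (v i₀) (v j)) • v j, fun i j => ?_⟩
  simp only [map_smul, LinearMap.smul_apply, smul_eq_mul]
  rcases eq_or_ne i j with rfl | hij
  · by_cases hi : i = i₀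
    · simp [hi, hv]
    · simp only [hi, hv, ↓reduceIte]
      linear_combination 2 * sq_eq (Ne.symm hi)
  · simp only [hij, if_false]
    by_cases hi : i = i₀
    · subst hi
      simp only [Ne.symm hij, if_true, if_false, one_mul]
      linear_combination sq_eq hij
    by_cases hj : j = i₀
    · subst hj
      simp only [hi, if_true, if_false, hB.eq (v i) (v j)]
      linear_combination sq_eq (Ne.symm hi)
    · simp only [hi, hj, if_false]
      rw [htri i₀ i j (Ne.symm hi) hij (Ne.symm hj), hB.eq (v i) (v i₀)]
      linear_combination (B (v i₀) (v j) ^ 2) * sq_eq (Ne.symm hi) + sq_eq (Ne.symm hj)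

theorem le_finrank_of_sendsSwapsToReflections [Module.Finite (ZMod 3) V] (hB : B.IsSymm) {m : ℕ}
    (hm : (m + 1 : ZMod 3) ≠ 0) {ρ : Perm (Fin (m + 1)) →* Module.End (ZMod 3) V}
    (hρ : Injective ρ) (hrefl : SendsSwapsToReflections B ρ) : m ≤ finrank (ZMod 3) V := by
  obtain _ | m := m
  · exact Nat.zero_le _
  choose v hv hρv using fun j : Fin (m + 1) =>
    hrefl (swap 0 j.succ) ⟨0, j.succ, (Fin.succ_ne_zero j).symm, rfl⟩
  have hne : Pairwise fun i j => B (v i) (v j) ≠ 0 := by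
    intro i j hij h
    have hcomm := commute_preReflection_of_orthogonal h ((hB.eq _ _).trans h)
    rw [← hρv, ← hρv] at hcomm
    refine not_commute_swap_swap (Fin.succ_ne_zero i).symm (Fin.succ_ne_zero j).symm
      (Fin.succ_inj.not.2 hij) (hρ ?_)
    simpa only [map_mul] using hcomm.eq
  have htri : ∀ i j k, i ≠ j → j ≠ k → i ≠ k →
      B (v j) (v k) = B (v j) (v i) * B (v i) (v k) := by
    intro i j k hij hjk hik
    have hconj : ρ (swap i.succ j.succ) = preReflection (preReflection (v i) (B.flip (v i)) (v j))
        (B.flip (preReflection (v i) (B.flip (v i)) (v j))) := by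
      rw [← swap_mul_swap_mul_swap (Fin.succ_ne_zero j) (Fin.succ_inj.not.2 hij.symm),
        swap_comm j.succ 0, map_mul, map_mul, hρv, hρv, preReflection_mul_mul_self hB (hv i)]
    have hcomm : Commute (swap 0 k.succ) (swap i.succ j.succ) :=
      (Perm.disjoint_swap_swap (by simp [List.nodup_cons, hij, hjk.symm, hik.symm,
        (Fin.succ_ne_zero _).symm])).commute
    have hcomm' := hcomm.map ρ
    rw [hρv, hconj] at hcomm'
    rcases orthogonal_or_preReflection_eq_of_commute hB (hv k) hcomm' with h | h
    · simp only [preReflection_apply, LinearMap.BilinForm.flip_apply, map_sub, map_smul,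
        smul_eq_mul] at h
      rw [hB.eq (v j) (v k), hB.eq (v i) (v k)]
      linear_combination h
    · rw [← hconj, ← hρv] at h
      have := congrArg (· 0) (hρ h)
      simp [swap_apply_of_ne_of_ne (Fin.succ_ne_zero i).symm (Fin.succ_ne_zero j).symm] at this
  obtain ⟨u, hu⟩ := exists_gram_eq_ite_of_mul_eq hB 0 hv hne htri
  simpa using (linearIndependent_of_gram_eq hu (by simpa using hm)).fintype_card_le_finrank

end ZModThree

lemma isSimplex_dotProductBilin_cons {K : Type*} [CommRing K] {n : ℕ} {c : K}
    (hc : n * c * c = 1 + 2 * c) :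
    IsSimplex (dotProductBilin K K)
      (Fin.cons (c • 1) (fun j => Pi.single j 1) : Fin (n + 1) → Fin n → K) := by
  refine ⟨(Fin.cons c 0 : Fin (n + 1) → K), fun a b => ?_⟩
  cases a using Fin.cases <;> cases b using Fin.cases
  · simp only [Fin.cons_zero, map_smul, LinearMap.smul_apply, dotProductBilin_apply_apply,
      one_dotProduct_one, Fintype.card_fin, smul_eq_mul, ↓reduceIte]
    linear_combination hc
  · simp [(Fin.succ_ne_zero _).symm]
  · simp [Fin.succ_ne_zero]
  · simp [Pi.single_apply, eq_comm]

theorem exists_injective_sendsSwapsToReflections {n : ℕ} (hn : 3 ≤ n)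
    (hn1 : (n : ZMod 3) ≠ 1) :
    ∃ ρ : Perm (Fin (n + 1)) →* Module.End (ZMod 3) (Fin n → ZMod 3),
      Injective ρ ∧ SendsSwapsToReflections (dotProductBilin (ZMod 3) (ZMod 3)) ρ := by
  have hp := isSimplex_dotProductBilin_cons (n := n) (c := 1 - (n : ZMod 3))
    (by revert hn1; generalize (n : ZMod 3) = x; revert x; decide)
  have : NeZero (2 : ZMod 3) := ⟨by decide⟩
  exact ⟨hp.permRep, hp.injective_permRep (by simpa using hn), hp.sendsSwapsToReflections⟩

/-- φ(O_n^{+,+}(3)) = n + 1 when n ≢ 1 (mod 3): S_{n+1} embeds with transpositions going to reflections t_v with B(v,v) = 2, while S_{n+2} does not. -/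
theorem phi_O_plus_plus_3_not_mod_one (n : ℕ) (hn : 3 ≤ n) (hmod : n % 3 ≠ 1) :
    (∃ ψ : Equiv.Perm (Fin (n + 1)) →* ((Fin n → ZMod 3) ≃ₗ[ZMod 3] (Fin n → ZMod 3)),
      Function.Injective ψ ∧
      ∀ τ : Equiv.Perm (Fin (n + 1)), τ.IsSwap →
        ∃ v : Fin n → ZMod 3, oForm n v v = 2 ∧
          ∀ w, (ψ τ) w = w - oForm n w v • v) ∧
    ¬ (∃ ψ : Equiv.Perm (Fin (n + 2)) →* ((Fin n → ZMod 3) ≃ₗ[ZMod 3] (Fin n → ZMod 3)),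
      Function.Injective ψ ∧
      ∀ τ : Equiv.Perm (Fin (n + 2)), τ.IsSwap →
        ∃ v : Fin n → ZMod 3, oForm n v v = 2 ∧
          ∀ w, (ψ τ) w = w - oForm n w v • v) := by
  have hn1 : (n : ZMod 3) ≠ 1 := fun h => hmod (by rw [← ZMod.val_natCast, h]; rfl)
  refine ⟨?_, ?_⟩
  · obtain ⟨ρ, hρ, hrefl⟩ := exists_injective_sendsSwapsToReflections hn hn1
    refine ⟨(LinearMap.GeneralLinearGroup.generalLinearEquiv _ _).toMonoidHom.comp ρ.toHomUnits,
      fun σ τ h => hρ (by simpa [Units.ext_iff] using h), fun τ hτ => ?_⟩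
    obtain ⟨v, hv, hτv⟩ := hrefl τ hτ
    exact ⟨v, hv, fun w => by simp [hτv, preReflection_apply, oForm, dotProduct]⟩
  · rintro ⟨ψ, hψ, hrefl⟩
    have := le_finrank_of_sendsSwapsToReflections (B := dotProductBilin (ZMod 3) (ZMod 3))
      ⟨dotProduct_comm⟩ (m := n + 1)
      (ρ := LinearEquiv.automorphismGroup.toLinearMapMonoidHom.comp ψ)
      ?_ (LinearEquiv.toLinearMap_injective.comp hψ) fun τ hτ => ?_
    · simp at this
    · revert hn1; push_cast; generalize (n : ZMod 3) = x; revert x; decide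
    · obtain ⟨v, hv, hτv⟩ := hrefl τ hτ
      exact ⟨v, hv, LinearMap.ext fun w => by
        simp [hτv, preReflection_apply, oForm, dotProduct]⟩
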